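/- There is an absolute constant c > 0 with the following property. Let θ be a complex number, a, q ∈ ℤ[i] with q ≠ 0 and gcd(a,q) = 1, and suppose θ = a/q + γ where |γ| ≤ C|q|^{-2} with C := 2 + √2. Then for all z ≥ 1 and all Δ₁, Δ₂ with 0 ≤ Δ₁, Δ₂ ≤ 1/2, one has Σ_θ(z, Δ₁, Δ₂) := #{n ∈ ℤ[i] : 0 < N(n) ≤ z, ‖Im(nθ)‖ ≤ Δ₁, ‖Re(nθ)‖ ≤ Δ₂} ≤ c·(1 + z/|q|²)·(1 + Δ₁|q|)·(1 + Δ₂|q|). -/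

import Mathlib

/-- Distance from a real number to the nearest integer. -/
noncomputable def dInt (t : ℝ) : ℝ := min (Int.fract t) (1 - Int.fract t)

/-- The norm `N(n) = |n|²` of a Gaussian integer, as a real number. -/
noncomputable def Nm (n : GaussianInt) : ℝ := ‖GaussianInt.toComplex n‖ ^ 2

/-- The complex absolute value of a Gaussian integer. -/
noncomputable def absG (n : GaussianInt) : ℝ := ‖GaussianInt.toComplex n‖

/-!
Cut the plane into squares of side `|q| / 2` and let `n₀` be the corner of the square containing
`n`. Since `θ = a / q + γ`, the point `n θ - (n - n₀) γ = n a / q + n₀ γ` is, modulo `ℤ[i]`, a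
translate of `n a / q` that is constant on each square; for a counted `n` it lies within
`Δ + C / |q|` of `ℤ[i]` in each coordinate, because `|(n - n₀) γ| ≤ |q| · C / |q|²`. Two points
`n ≠ n'` of one square have `|n - n'| < |q|`, so `q ∤ n - n'` and, as `gcd(a, q) = 1`, the points
`n a / q` and `n' a / q` are `1 / |q|`-apart modulo `ℤ[i]`. Hence `n` is determined by its square
and by the cell of side `1 / (2|q|)` containing its reduced point, and there are
`O(1 + z / |q|²)` squares and `O((1 + Δ₁ |q|) (1 + Δ₂ |q|))` relevant cells.
-/

open Complex

lemma dInt_eq_abs_sub_round (t : ℝ) : dInt t = |t - round t| := (abs_sub_round_eq_min t).symm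

lemma Complex.norm_lt_two_mul_of_abs_re_lt_of_abs_im_lt {x : ℂ} {δ : ℝ} (hre : |x.re| < δ)
    (him : |x.im| < δ) : ‖x‖ < 2 * δ := by
  linarith [norm_le_abs_re_add_abs_im x]

lemma Int.floor_mem_Icc_floor_neg_floor {t R : ℝ} (h : |t| ≤ R) :
    ⌊t⌋ ∈ Finset.Icc ⌊-R⌋ ⌊R⌋ :=
  Finset.mem_Icc.2 ⟨Int.floor_le_floor (neg_le_of_abs_le h), Int.floor_le_floor (le_of_abs_le h)⟩

lemma Int.card_Icc_floor_neg_floor_le {R : ℝ} (hR : 0 ≤ R) :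
    ((Finset.Icc ⌊-R⌋ ⌊R⌋).card : ℝ) ≤ 2 * R + 2 := by
  rw [Int.card_Icc, ← Int.cast_natCast, Int.toNat_eq_max]
  push_cast
  exact max_le (by linarith [Int.floor_le R, Int.sub_one_lt_floor (-R)]) (by linarith)

section Grid

variable {δ : ℝ}

noncomputable def gridCell (δ : ℝ) (x : ℂ) : ℤ × ℤ := (⌊x.re / δ⌋, ⌊x.im / δ⌋)

noncomputable def gridCorner (δ : ℝ) (x : ℂ) : ℂ := δ * ((gridCell δ x).1 + (gridCell δ x).2 * I)

lemma abs_sub_lt_of_floor_div_eq (hδ : 0 < δ) {u v : ℝ} (h : ⌊u / δ⌋ = ⌊v / δ⌋) :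
    |u - v| < δ := by
  have := Int.abs_sub_lt_one_of_floor_eq_floor h
  rwa [← sub_div, abs_div, abs_of_pos hδ, div_lt_one hδ] at this

lemma abs_sub_mul_floor_div_lt (hδ : 0 < δ) (u : ℝ) : |u - δ * ⌊u / δ⌋| < δ := by
  have h : u - δ * ⌊u / δ⌋ = δ * Int.fract (u / δ) := by
    rw [Int.fract, mul_sub, mul_div_cancel₀ u hδ.ne']
  rw [h, abs_of_nonneg (mul_nonneg hδ.le (Int.fract_nonneg _))]
  simpa using mul_lt_mul_of_pos_left (Int.fract_lt_one (u / δ)) hδ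

lemma norm_sub_lt_of_gridCell_eq (hδ : 0 < δ) {x y : ℂ} (h : gridCell δ x = gridCell δ y) :
    ‖x - y‖ < 2 * δ := by
  obtain ⟨hre, him⟩ := Prod.mk.inj h
  exact norm_lt_two_mul_of_abs_re_lt_of_abs_im_lt (abs_sub_lt_of_floor_div_eq hδ hre)
    (abs_sub_lt_of_floor_div_eq hδ him)

lemma norm_sub_gridCorner_lt (hδ : 0 < δ) (x : ℂ) : ‖x - gridCorner δ x‖ < 2 * δ := by
  apply norm_lt_two_mul_of_abs_re_lt_of_abs_im_lt <;>
    simpa [gridCorner, gridCell] using abs_sub_mul_floor_div_lt hδ _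

lemma gridCell_mem (hδ : 0 < δ) {R₁ R₂ : ℝ} {x : ℂ} (hre : |x.re| ≤ R₁) (him : |x.im| ≤ R₂) :
    gridCell δ x ∈ Finset.Icc ⌊-(R₁ / δ)⌋ ⌊R₁ / δ⌋ ×ˢ Finset.Icc ⌊-(R₂ / δ)⌋ ⌊R₂ / δ⌋ := by
  refine Finset.mem_product.2 ⟨Int.floor_mem_Icc_floor_neg_floor ?_,
    Int.floor_mem_Icc_floor_neg_floor ?_⟩ <;>
  · rw [abs_div, abs_of_pos hδ]
    gcongr

end Grid

namespace GaussianInt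

lemma one_le_norm_toComplex {w : GaussianInt} (hw : w ≠ 0) : 1 ≤ ‖(w : ℂ)‖ := by
  have h : (1 : ℝ) ≤ w.norm := by exact_mod_cast GaussianInt.norm_pos.2 hw
  rw [intCast_real_norm, Complex.normSq_eq_norm_sq] at h
  nlinarith [_root_.norm_nonneg (w : ℂ)]

lemma norm_toComplex_pos {w : GaussianInt} (hw : w ≠ 0) : 0 < ‖(w : ℂ)‖ :=
  zero_lt_one.trans_le (one_le_norm_toComplex hw)

lemma norm_toComplex_le_of_dvd {q d : GaussianInt} (h : q ∣ d) (hd : d ≠ 0) :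
    ‖(q : ℂ)‖ ≤ ‖(d : ℂ)‖ := by
  obtain ⟨m, rfl⟩ := h
  rw [toComplex_mul, norm_mul]
  exact le_mul_of_one_le_right (_root_.norm_nonneg _)
    (one_le_norm_toComplex (right_ne_zero_of_mul hd))

lemma eq_zero_of_norm_lt_of_norm_mul_div_sub_lt {a q d m : GaussianInt} (hcop : IsCoprime a q)
    (hd : ‖(d : ℂ)‖ < ‖(q : ℂ)‖) (hdm : ‖(d : ℂ) * a / q - m‖ < 1 / ‖(q : ℂ)‖) : d = 0 := by
  have hQ : 0 < ‖(q : ℂ)‖ := (_root_.norm_nonneg _).trans_lt hd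
  have hw : d * a - m * q = 0 := by
    by_contra hw
    have hprod : ((d * a - m * q : GaussianInt) : ℂ) = ((d : ℂ) * a / q - m) * q := by
      rw [toComplex_sub, toComplex_mul, toComplex_mul, sub_mul,
        div_mul_cancel₀ _ (norm_pos_iff.1 hQ)]
    have := one_le_norm_toComplex hw
    rw [hprod, norm_mul] at this
    exact this.not_gt ((lt_div_iff₀ hQ).1 hdm)
  have hdvd : q ∣ d := hcop.symm.dvd_of_dvd_mul_right ⟨m, by linear_combination hw⟩
  by_contra hd0
  exact (norm_toComplex_le_of_dvd hdvd hd0).not_gt hd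

noncomputable def nearest (x : ℂ) : GaussianInt := ⟨round x.re, round x.im⟩

lemma abs_re_sub_nearest (x : ℂ) : |(x - nearest x).re| = dInt x.re := by
  simp [nearest, dInt_eq_abs_sub_round, toComplex_def']

lemma abs_im_sub_nearest (x : ℂ) : |(x - nearest x).im| = dInt x.im := by
  simp [nearest, dInt_eq_abs_sub_round, toComplex_def']

end GaussianInt

section Phase

open GaussianInt

variable (θ : ℂ) (a q : GaussianInt)

/-- Modulo `ℤ[i]`, this is `n a / q` plus a constant on each square of side `|q| / 2`. -/
noncomputable def reducedPhase (n : GaussianInt) : ℂ :=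
  n * θ - nearest (n * θ) - (n - gridCorner (‖(q : ℂ)‖ / 2) n) * (θ - a / q)

lemma reducedPhase_sub_of_gridCell_eq {n n' : GaussianInt}
    (h : gridCell (‖(q : ℂ)‖ / 2) n = gridCell (‖(q : ℂ)‖ / 2) n') :
    reducedPhase θ a q n - reducedPhase θ a q n' =
      ((n - n' : GaussianInt) : ℂ) * a / q -
        (nearest (n * θ) - nearest (n' * θ) : GaussianInt) := by
  simp only [reducedPhase, gridCorner, h, toComplex_sub]
  ring

variable {θ a q}

lemma norm_drift_le (hq : q ≠ 0) {C : ℝ} (hγ : ‖θ - a / q‖ ≤ C / ‖(q : ℂ)‖ ^ 2) (n : GaussianInt) :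
    ‖(n - gridCorner (‖(q : ℂ)‖ / 2) n) * (θ - a / q)‖ ≤ C / ‖(q : ℂ)‖ := by
  have hQ : 0 < ‖(q : ℂ)‖ := norm_toComplex_pos hq
  rw [norm_mul]
  calc _ ≤ (2 * (‖(q : ℂ)‖ / 2)) * (C / ‖(q : ℂ)‖ ^ 2) :=
        mul_le_mul (norm_sub_gridCorner_lt (half_pos hQ) _).le hγ (norm_nonneg _) (by positivity)
    _ = C / ‖(q : ℂ)‖ := by field_simp

lemma abs_re_reducedPhase_le (hq : q ≠ 0) {C : ℝ} (hγ : ‖θ - a / q‖ ≤ C / ‖(q : ℂ)‖ ^ 2)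
    (n : GaussianInt) : |(reducedPhase θ a q n).re| ≤ dInt ((n : ℂ) * θ).re + C / ‖(q : ℂ)‖ := by
  rw [reducedPhase, sub_re, ← abs_re_sub_nearest]
  exact (abs_sub _ _).trans (add_le_add_right ((abs_re_le_norm _).trans (norm_drift_le hq hγ n)) _)

lemma abs_im_reducedPhase_le (hq : q ≠ 0) {C : ℝ} (hγ : ‖θ - a / q‖ ≤ C / ‖(q : ℂ)‖ ^ 2)
    (n : GaussianInt) : |(reducedPhase θ a q n).im| ≤ dInt ((n : ℂ) * θ).im + C / ‖(q : ℂ)‖ := by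
  rw [reducedPhase, sub_im, ← abs_im_sub_nearest]
  exact (abs_sub _ _).trans (add_le_add_right ((abs_im_le_norm _).trans (norm_drift_le hq hγ n)) _)

lemma injective_gridCell_reducedPhase (hq : q ≠ 0) (hcop : IsCoprime a q) :
    Function.Injective fun n : GaussianInt =>
      (gridCell (‖(q : ℂ)‖ / 2) n, gridCell (1 / (2 * ‖(q : ℂ)‖)) (reducedPhase θ a q n)) := by
  have hQ : 0 < ‖(q : ℂ)‖ := norm_toComplex_pos hq
  intro n n' h
  obtain ⟨hsquare, hcell⟩ := Prod.mk.inj h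
  rw [← sub_eq_zero]
  refine eq_zero_of_norm_lt_of_norm_mul_div_sub_lt (m := nearest (n * θ) - nearest (n' * θ)) hcop
    ?_ ?_
  · rw [toComplex_sub]
    exact (norm_sub_lt_of_gridCell_eq (half_pos hQ) hsquare).trans_eq (by ring)
  · rw [← reducedPhase_sub_of_gridCell_eq θ a q hsquare]
    exact (norm_sub_lt_of_gridCell_eq (by positivity) hcell).trans_eq (by field_simp)

theorem ncard_le_of_norm_sub_div_le (hq : q ≠ 0) (hcop : IsCoprime a q) {C : ℝ}
    (hγ : ‖θ - a / q‖ ≤ C / ‖(q : ℂ)‖ ^ 2) {r Δ₁ Δ₂ : ℝ}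
    (hr : 0 ≤ r) (hΔ₁ : 0 ≤ Δ₁) (hΔ₂ : 0 ≤ Δ₂) {S : Set GaussianInt}
    (hS : ∀ n ∈ S, ‖(n : ℂ)‖ ≤ r ∧ dInt ((n : ℂ) * θ).im ≤ Δ₁ ∧ dInt ((n : ℂ) * θ).re ≤ Δ₂) :
    (S.ncard : ℝ) ≤ (4 * r / ‖(q : ℂ)‖ + 2) ^ 2 * (4 * Δ₁ * ‖(q : ℂ)‖ + 4 * C + 2) *
      (4 * Δ₂ * ‖(q : ℂ)‖ + 4 * C + 2) := by
  set Q := ‖(q : ℂ)‖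
  have hQ : 0 < Q := norm_toComplex_pos hq
  have hC : 0 ≤ C := by
    simpa using (le_div_iff₀ (by positivity)).1 ((_root_.norm_nonneg _).trans hγ)
  have hmaps : ∀ n ∈ S, (gridCell (Q / 2) n, gridCell (1 / (2 * Q)) (reducedPhase θ a q n)) ∈
      (Finset.Icc ⌊-(r / (Q / 2))⌋ ⌊r / (Q / 2)⌋ ×ˢ Finset.Icc ⌊-(r / (Q / 2))⌋ ⌊r / (Q / 2)⌋) ×ˢ
        (Finset.Icc ⌊-((Δ₂ + C / Q) / (1 / (2 * Q)))⌋ ⌊(Δ₂ + C / Q) / (1 / (2 * Q))⌋ ×ˢ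
          Finset.Icc ⌊-((Δ₁ + C / Q) / (1 / (2 * Q)))⌋ ⌊(Δ₁ + C / Q) / (1 / (2 * Q))⌋) := by
    intro n hn
    obtain ⟨hnr, hn₁, hn₂⟩ := hS n hn
    exact Finset.mem_product.2
      ⟨gridCell_mem (half_pos hQ) ((abs_re_le_norm _).trans hnr) ((abs_im_le_norm _).trans hnr),
        gridCell_mem (by positivity) ((abs_re_reducedPhase_le hq hγ n).trans (by linarith))
          ((abs_im_reducedPhase_le hq hγ n).trans (by linarith))⟩
  have hcard := Nat.cast_le (α := ℝ).2 <| Set.ncard_le_ncard_of_injOn _ hmaps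
    (injective_gridCell_reducedPhase hq hcop).injOn (Finset.finite_toSet _)
  simp only [Set.ncard_coe_finset, Finset.card_product, Nat.cast_mul] at hcard
  have hsq := (Int.card_Icc_floor_neg_floor_le (R := r / (Q / 2)) (by positivity)).trans_eq
    (show _ = 4 * r / Q + 2 by field_simp; ring)
  have h₁ := (Int.card_Icc_floor_neg_floor_le (R := (Δ₁ + C / Q) / (1 / (2 * Q)))
    (by positivity)).trans_eq (show _ = 4 * Δ₁ * Q + 4 * C + 2 by field_simp; ring)
  have h₂ := (Int.card_Icc_floor_neg_floor_le (R := (Δ₂ + C / Q) / (1 / (2 * Q)))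
    (by positivity)).trans_eq (show _ = 4 * Δ₂ * Q + 4 * C + 2 by field_simp; ring)
  calc (S.ncard : ℝ) ≤ _ := hcard
    _ ≤ (4 * r / Q + 2) * (4 * r / Q + 2) *
        ((4 * Δ₂ * Q + 4 * C + 2) * (4 * Δ₁ * Q + 4 * C + 2)) := by gcongr
    _ = _ := by ring

end Phase

theorem count_small_fractional_parts :
    ∃ c : ℝ, 0 < c ∧
      ∀ (θ : ℂ) (a q : GaussianInt), q ≠ 0 → IsCoprime a q →
        ‖θ - GaussianInt.toComplex a / GaussianInt.toComplex q‖ ≤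
          (2 + Real.sqrt 2) / absG q ^ 2 →
        ∀ (z Δ₁ Δ₂ : ℝ), 1 ≤ z → 0 ≤ Δ₁ → Δ₁ ≤ 1 / 2 → 0 ≤ Δ₂ → Δ₂ ≤ 1 / 2 →
          (Set.ncard {n : GaussianInt | 0 < Nm n ∧ Nm n ≤ z ∧
              dInt ((GaussianInt.toComplex n * θ).im) ≤ Δ₁ ∧
              dInt ((GaussianInt.toComplex n * θ).re) ≤ Δ₂} : ℝ) ≤
            c * (1 + z / absG q ^ 2) * (1 + Δ₁ * absG q) * (1 + Δ₂ * absG q) := by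
  refine ⟨8192, by norm_num, fun θ a q hq hcop hγ z Δ₁ Δ₂ hz hΔ₁ _ hΔ₂ _ => ?_⟩
  have hz₀ : 0 ≤ z := by linarith
  have hQ : 1 ≤ absG q := GaussianInt.one_le_norm_toComplex hq
  have hC : 2 + √2 ≤ 7 / 2 := by nlinarith [Real.sq_sqrt (show (0 : ℝ) ≤ 2 by norm_num)]
  refine (ncard_le_of_norm_sub_div_le hq hcop hγ (Real.sqrt_nonneg z) hΔ₁ hΔ₂
    fun n hn => ⟨(Real.le_sqrt (norm_nonneg _) hz₀).2 hn.2.1, hn.2.2⟩).trans ?_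
  have hdisc : (4 * √z / absG q + 2) ^ 2 ≤ 32 * (1 + z / absG q ^ 2) := by
    have hs : (√z / absG q) ^ 2 = z / absG q ^ 2 := by rw [div_pow, Real.sq_sqrt hz₀]
    rw [mul_div_assoc, ← hs]
    nlinarith [sq_nonneg (2 * (√z / absG q) - 1)]
  have hbox : ∀ Δ, 0 ≤ Δ → 4 * Δ * absG q + 4 * (2 + √2) + 2 ≤ 16 * (1 + Δ * absG q) :=
    fun Δ hΔ => by nlinarith [mul_nonneg hΔ (zero_le_one.trans hQ)]
  calc _ ≤ (32 * (1 + z / absG q ^ 2)) * (16 * (1 + Δ₁ * absG q)) * (16 * (1 + Δ₂ * absG q)) := by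
        gcongr
        exacts [hdisc, hbox Δ₁ hΔ₁, hbox Δ₂ hΔ₂]
    _ = _ := by ring
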